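/- The feasible region X of the two-system joint energy and spectrum cooperation problem (P1) is a convex set. -/

import Mathlib

/-! All constraints of (P1) except the QoS constraints are linear, hence cut out convex sets.
The rate `b * logb 2 (1 + g * p / (b * N₀))` is the perspective `b * φ (p / b)` of the concave
function `φ u = logb 2 (1 + g * u / N₀)`, so it is jointly concave in `(p, b)` and the QoS
constraint `r ≤ rate` describes a convex superlevel set. -/

/-- Decision vector of problem (P1): `(E, G, e, w, p, b)` where `E G e w : Fin 2 → ℝ`
are the per-system renewable energy, grid energy, shared energy and shared bandwidth,
and `p b : ι → ℝ` are the per-user power and bandwidth allocations. -/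
abbrev P1Vec (ι : Type*) :=
  (Fin 2 → ℝ) × (Fin 2 → ℝ) × (Fin 2 → ℝ) × (Fin 2 → ℝ) × (ι → ℝ) × (ι → ℝ)

/-- Feasibility (membership in the region `X`) for problem (P1). -/
def P1Feasible {ι : Type*} [DecidableEq ι] (K : Fin 2 → Finset ι) (g r : ι → ℝ)
    (W Pc Ebar : Fin 2 → ℝ) (N₀ βE βB : ℝ) (x : P1Vec ι) : Prop :=
  match x with
  | (E, G, e, w, p, b) =>
    (∀ i, 0 ≤ E i) ∧ (∀ i, 0 ≤ G i) ∧ (∀ i, 0 ≤ e i) ∧ (∀ i, 0 ≤ w i) ∧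
    (∀ k ∈ K 0 ∪ K 1, 0 ≤ p k) ∧ (∀ k ∈ K 0 ∪ K 1, 0 < b k) ∧
    (∀ i, (∑ k ∈ K i, p k) + Pc i ≤ E i + G i + βE * e (1 - i) - e i) ∧
    (∀ i, (∑ k ∈ K i, b k) ≤ W i + βB * w (1 - i) - w i) ∧
    (∀ i, E i ≤ Ebar i) ∧
    (∀ i, ∀ k ∈ K i, r k ≤ b k * Real.logb 2 (1 + g k * p k / (b k * N₀)))

open Set Real

theorem ConcaveOn.perspective {𝕜 E : Type*} [Field 𝕜] [LinearOrder 𝕜] [IsStrictOrderedRing 𝕜]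
    [AddCommGroup E] [Module 𝕜 E] {s : Set E} {f : E → 𝕜} (hf : ConcaveOn 𝕜 s f) :
    ConcaveOn 𝕜 {q : E × 𝕜 | 0 < q.2 ∧ q.2⁻¹ • q.1 ∈ s} (fun q => q.2 * f (q.2⁻¹ • q.1)) := by
  have hcombo : ∀ ⦃x₁ : E⦄ ⦃t₁ : 𝕜⦄, 0 < t₁ → ∀ ⦃x₂ : E⦄ ⦃t₂ : 𝕜⦄, 0 < t₂ → ∀ ⦃a b : 𝕜⦄,
      0 ≤ a → 0 ≤ b → a + b = 1 → 0 < a * t₁ + b * t₂ ∧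
        (a * t₁ + b * t₂)⁻¹ • (a • x₁ + b • x₂) =
          (a * t₁ / (a * t₁ + b * t₂)) • (t₁⁻¹ • x₁) + (b * t₂ / (a * t₁ + b * t₂)) • (t₂⁻¹ • x₂) ∧
        a * t₁ / (a * t₁ + b * t₂) + b * t₂ / (a * t₁ + b * t₂) = 1 := by
    intro x₁ t₁ ht₁ x₂ t₂ ht₂ a b ha hb hab
    have ht : 0 < a * t₁ + b * t₂ := by
      rcases ha.eq_or_lt with rfl | ha
      · simp only [zero_add] at hab; simp [hab, ht₂]
      · positivity
    refine ⟨ht, ?_, by field_simp⟩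
    rw [smul_add, smul_smul, smul_smul, smul_smul, smul_smul]
    congr 2 <;> field_simp
  refine ⟨?_, ?_⟩
  · rintro ⟨x₁, t₁⟩ ⟨ht₁, hx₁⟩ ⟨x₂, t₂⟩ ⟨ht₂, hx₂⟩ a b ha hb hab
    obtain ⟨ht, hcomb, hsum⟩ := hcombo ht₁ ht₂ ha hb hab
    refine ⟨ht, ?_⟩
    simp only [Prod.smul_mk, Prod.mk_add_mk, smul_eq_mul]
    rw [hcomb]
    exact hf.1 hx₁ hx₂ (by positivity) (by positivity) hsum
  · rintro ⟨x₁, t₁⟩ ⟨ht₁, hx₁⟩ ⟨x₂, t₂⟩ ⟨ht₂, hx₂⟩ a b ha hb hab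
    obtain ⟨ht, hcomb, hsum⟩ := hcombo ht₁ ht₂ ha hb hab
    simp only [Prod.smul_mk, Prod.mk_add_mk, smul_eq_mul]
    rw [hcomb]
    calc a * (t₁ * f (t₁⁻¹ • x₁)) + b * (t₂ * f (t₂⁻¹ • x₂))
        = (a * t₁ + b * t₂) * ((a * t₁ / (a * t₁ + b * t₂)) • f (t₁⁻¹ • x₁) +
            (b * t₂ / (a * t₁ + b * t₂)) • f (t₂⁻¹ • x₂)) := by
          simp only [smul_eq_mul]; field_simp
      _ ≤ _ := by gcongr; exact hf.2 hx₁ hx₂ (by positivity) (by positivity) hsum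

theorem Real.concaveOn_logb_Ioi {b : ℝ} (hb : 1 ≤ b) : ConcaveOn ℝ (Ioi 0) (logb b) :=
  (strictConcaveOn_log_Ioi.concaveOn.smul (inv_nonneg.2 (log_nonneg hb))).congr
    fun x _ => by simp [logb, div_eq_inv_mul]

theorem Real.concaveOn_logb_one_add_mul {b c : ℝ} (hb : 1 ≤ b) (hc : 0 ≤ c) :
    ConcaveOn ℝ (Ici 0) (fun u => logb b (1 + c * u)) := by
  have h := (concaveOn_logb_Ioi hb).comp_affineMap (AffineMap.const ℝ ℝ 1 + c • AffineMap.id ℝ ℝ)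
  refine (h.subset (fun u (hu : 0 ≤ u) => ?_) (convex_Ici 0)).congr fun u _ => ?_
  · simp only [mem_preimage, AffineMap.coe_add, AffineMap.coe_const, AffineMap.coe_smul,
      AffineMap.coe_id, Pi.add_apply, Pi.smul_apply, Function.const_apply, id, smul_eq_mul, mem_Ioi]
    positivity
  · simp

noncomputable def shannonRate (g N₀ p b : ℝ) : ℝ := b * logb 2 (1 + g * p / (b * N₀))

theorem concaveOn_shannonRate {g N₀ : ℝ} (hg : 0 ≤ g) (hN₀ : 0 ≤ N₀) :
    ConcaveOn ℝ {q : ℝ × ℝ | 0 ≤ q.1 ∧ 0 < q.2} (fun q => shannonRate g N₀ q.1 q.2) := by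
  have h := (concaveOn_logb_one_add_mul one_le_two (div_nonneg hg hN₀)).perspective
  have hdom : {q : ℝ × ℝ | 0 < q.2 ∧ q.2⁻¹ • q.1 ∈ Ici 0} = {q | 0 ≤ q.1 ∧ 0 < q.2} := by
    ext ⟨p, b⟩
    simp only [mem_ofPred_eq, mem_Ici, smul_eq_mul]
    constructor
    · rintro ⟨hb, hp⟩
      exact ⟨(mul_nonneg_iff_of_pos_left (inv_pos.2 hb)).1 hp, hb⟩
    · rintro ⟨hp, hb⟩
      exact ⟨hb, by positivity⟩
  rw [hdom] at h
  refine h.congr fun q _ => ?_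
  simp only [shannonRate, smul_eq_mul]
  ring_nf

theorem P1_feasible_region_convex_general {ι : Type*} [DecidableEq ι] (K : Fin 2 → Finset ι)
    (g r : ι → ℝ) (hg : ∀ k ∈ K 0 ∪ K 1, 0 < g k)
    (W Pc Ebar : Fin 2 → ℝ)
    (N₀ βE βB : ℝ) (hN₀ : 0 < N₀) :
    Convex ℝ {x : P1Vec ι | P1Feasible K g r W Pc Ebar N₀ βE βB x} := by
  rintro ⟨E, G, e, w, p, b⟩ ⟨hE, hG, he, hw, hp, hb, hpow, hbw, hEbar, hrate⟩
    ⟨E', G', e', w', p', b'⟩ ⟨hE', hG', he', hw', hp', hb', hpow', hbw', hEbar', hrate'⟩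
    θ θ' hθ hθ' hθθ'
  have hconv {s : Set ℝ} (hs : Convex ℝ s) {u u' : ℝ} (hu : u ∈ s) (hu' : u' ∈ s) :
      θ * u + θ' * u' ∈ s :=
    hs hu hu' hθ hθ' hθθ'
  simp only [Prod.smul_mk, Prod.mk_add_mk]
  refine ⟨fun i => hconv (convex_Ici 0) (hE i) (hE' i),
    fun i => hconv (convex_Ici 0) (hG i) (hG' i),
    fun i => hconv (convex_Ici 0) (he i) (he' i),
    fun i => hconv (convex_Ici 0) (hw i) (hw' i),
    fun k hk => hconv (convex_Ici 0) (hp k hk) (hp' k hk),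
    fun k hk => hconv (convex_Ioi 0) (hb k hk) (hb' k hk),
    fun i => ?_, fun i => ?_,
    fun i => hconv (convex_Iic _) (hEbar i) (hEbar' i),
    fun i k hk => ?_⟩
  · simp only [Pi.add_apply, Pi.smul_apply, smul_eq_mul]
    rw [Finset.sum_add_distrib, ← Finset.mul_sum, ← Finset.mul_sum]
    linear_combination mul_le_mul_of_nonneg_left (hpow i) hθ +
      mul_le_mul_of_nonneg_left (hpow' i) hθ' - Pc i * hθθ'
  · simp only [Pi.add_apply, Pi.smul_apply, smul_eq_mul]
    rw [Finset.sum_add_distrib, ← Finset.mul_sum, ← Finset.mul_sum]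
    linear_combination mul_le_mul_of_nonneg_left (hbw i) hθ +
      mul_le_mul_of_nonneg_left (hbw' i) hθ' + W i * hθθ'
  · have hk' : k ∈ K 0 ∪ K 1 := by
      revert hk; fin_cases i
      exacts [Finset.mem_union_left _, Finset.mem_union_right _]
    exact ((concaveOn_shannonRate (hg k hk').le hN₀.le).convex_ge (r k)
      (x := (p k, b k)) (y := (p' k, b' k)) ⟨⟨hp k hk', hb k hk'⟩, hrate i k hk⟩
      ⟨⟨hp' k hk', hb' k hk'⟩, hrate' i k hk⟩ hθ hθ' hθθ').2

/-- The feasible region `X` of problem (P1) is a convex set. -/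
theorem P1_feasible_region_convex {ι : Type*} [DecidableEq ι] (K : Fin 2 → Finset ι)
    (hK : ∀ i, (K i).Nonempty) (hdisj : Disjoint (K 0) (K 1))
    (g r : ι → ℝ) (hg : ∀ k ∈ K 0 ∪ K 1, 0 < g k) (hr : ∀ k ∈ K 0 ∪ K 1, 0 < r k)
    (W Pc Ebar αE αG : Fin 2 → ℝ)
    (hW : ∀ i, 0 < W i) (hPc : ∀ i, 0 ≤ Pc i) (hEbar : ∀ i, 0 ≤ Ebar i)
    (hαE : ∀ i, 0 < αE i) (hα : ∀ i, αE i < αG i)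
    (N₀ βE βB : ℝ) (hN₀ : 0 < N₀) (hβE : βE ∈ Set.Icc (0 : ℝ) 1)
    (hβB : βB = 0 ∨ βB = 1) :
    Convex ℝ {x : P1Vec ι | P1Feasible K g r W Pc Ebar N₀ βE βB x} :=
  P1_feasible_region_convex_general K g r hg W Pc Ebar N₀ βE βB hN₀
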